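/- (Theorem 5.5, bivariate Lipschitz-type estimate) Let n₁, n₂ ≥ 1 be natural numbers, 0 < q_i < p_i ≤ 1 (i = 1,2), 0 < α₁, α₂ ≤ 1, M > 0, and let E be a nonempty closed subset of [0,∞). Let f be a bounded continuous function on [0,∞)² satisfying |f(t,s) − f(x₁,y₁)| ≤ M·|t/(1+t) − x₁/(1+x₁)|^{α₁}·|s/(1+s) − y₁/(1+y₁)|^{α₂} for all t,s ≥ 0 and all (x₁,y₁) ∈ E×E. With Δ_{n₁}(x) = (1/(p₁q₁))·L_{n₁}^{p₁,q₁}((t/(1+t) − x/(1+x))²; x) and Δ_{n₂}(y) = (1/(p₂q₂))·L_{n₂}^{p₂,q₂}((s/(1+s) − y/(1+y))²; y), one has for all x, y ≥ 0: | L_{n₁,n₂}(f; p₁,p₂;q₁,q₂; x,y) − p₁q₁p₂q₂·f(x,y) | ≤ M·( Δ_{n₁}(x)^{α₁/2}·Δ_{n₂}(y)^{α₂/2} + Δ_{n₁}(x)^{α₁/2}·d(y,E)^{α₂} + Δ_{n₂}(y)^{α₂/2}·d(x,E)^{α₁} + 2·d(x,E)^{α₁}·d(y,E)^{α₂} ),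 where d(x,E) = inf{|x − z| : z ∈ E}. -/

import Mathlib

open Finset Filter
open scoped Classical

noncomputable section

/-- The `(p,q)`-integer `[n]_{p,q} = (p^n - q^n)/(p - q)`. -/
def pqInt (p q : ℝ) (n : ℕ) : ℝ := (p ^ n - q ^ n) / (p - q)

/-- The `(p,q)`-factorial. -/
def pqFact (p q : ℝ) : ℕ → ℝ
  | 0 => 1
  | n + 1 => pqFact p q n * pqInt p q (n + 1)

/-- The `(p,q)`-binomial coefficient. -/
def pqBinom (p q : ℝ) (n k : ℕ) : ℝ :=
  pqFact p q n / (pqFact p q k * pqFact p q (n - k))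

/-- `ℓ_n^{p,q}(x) = ∏_{s=0}^{n-1} (p^s + q^s x)`. -/
def pqEll (p q : ℝ) (n : ℕ) (x : ℝ) : ℝ :=
  ∏ s ∈ Finset.range n, (p ^ s + q ^ s * x)

/-- The node `p^{n-k+1}[k]_{p,q} / ([n-k+1]_{p,q} q^k)`. -/
def pqNode (p q : ℝ) (n k : ℕ) : ℝ :=
  p ^ (n - k + 1) * pqInt p q k / (pqInt p q (n - k + 1) * q ^ k)

/-- The `(p,q)`-Bleimann–Butzer–Hahn operator. -/
def bbh (p q : ℝ) (n : ℕ) (f : ℝ → ℝ) (x : ℝ) : ℝ :=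
  (p * q / pqEll p q n x) *
    ∑ k ∈ Finset.range (n + 1),
      f (pqNode p q n k) * p ^ ((n - k) * (n - k - 1) / 2) *
        q ^ (k * (k - 1) / 2) * pqBinom p q n k * x ^ k

/-- `δ_n(x)` from Theorem 3.1. -/
def pqDelta (p q : ℝ) (n : ℕ) (x : ℝ) : ℝ :=
  (x / (1 + x)) ^ 2 *
      (p ^ 2 * q ^ 3 * pqInt p q n * pqInt p q (n - 1) / (pqInt p q (n + 1)) ^ 2 *
          ((1 + x) / (p + q * x)) -
        2 * p * q * pqInt p q n / pqInt p q (n + 1) + 1) +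
    p ^ (n + 2) * q * pqInt p q n / (pqInt p q (n + 1)) ^ 2 * (x / (1 + x))

/-- Statistical convergence of a real sequence. -/
def StatConv (a : ℕ → ℝ) (l : ℝ) : Prop :=
  ∀ ε > (0 : ℝ), Tendsto (fun n : ℕ =>
    (((Finset.range (n + 1)).filter (fun k => ε ≤ |a k - l|)).card : ℝ) / n)
    atTop (nhds 0)

/-- A modulus of continuity. -/
def IsModulus (ω : ℝ → ℝ) : Prop :=
  (∀ δ, 0 ≤ δ → 0 ≤ ω δ) ∧
  (∀ δ₁ δ₂, 0 ≤ δ₁ → δ₁ ≤ δ₂ → ω δ₁ ≤ ω δ₂) ∧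
  (∀ δ₁ δ₂, 0 ≤ δ₁ → 0 ≤ δ₂ → ω (δ₁ + δ₂) ≤ ω δ₁ + ω δ₂) ∧
  Tendsto ω (nhdsWithin 0 (Set.Ioi 0)) (nhds 0)

/-- Membership in the class `H_ω`. -/
def MemHomega (ω f : ℝ → ℝ) : Prop :=
  ∀ x y : ℝ, 0 ≤ x → 0 ≤ y → |f x - f y| ≤ ω |x / (1 + x) - y / (1 + y)|

/-- The modulus `ω̃(f; δ)`. -/
def omegaTilde (f : ℝ → ℝ) (δ : ℝ) : ℝ :=
  sSup {d | ∃ t x : ℝ, 0 ≤ t ∧ 0 ≤ x ∧ |t / (1 + t) - x / (1 + x)| ≤ δ ∧ d = |f t - f x|}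

/-- The bivariate `(p,q)`-Bleimann–Butzer–Hahn operator. -/
def bbh2 (p₁ p₂ q₁ q₂ : ℝ) (n₁ n₂ : ℕ) (f : ℝ → ℝ → ℝ) (x y : ℝ) : ℝ :=
  (p₁ * p₂ * q₁ * q₂ / (pqEll p₁ q₁ n₁ x * pqEll p₂ q₂ n₂ y)) *
    ∑ k₁ ∈ Finset.range (n₁ + 1), ∑ k₂ ∈ Finset.range (n₂ + 1),
      f (pqNode p₁ q₁ n₁ k₁) (pqNode p₂ q₂ n₂ k₂) *
        p₁ ^ ((n₁ - k₁) * (n₁ - k₁ - 1) / 2) * q₁ ^ (k₁ * (k₁ - 1) / 2) *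
        p₂ ^ ((n₂ - k₂) * (n₂ - k₂ - 1) / 2) * q₂ ^ (k₂ * (k₂ - 1) / 2) *
        pqBinom p₁ q₁ n₁ k₁ * pqBinom p₂ q₂ n₂ k₂ * x ^ k₁ * y ^ k₂

/-- Statistical convergence of a double real sequence (Pringsheim sense). -/
def StatConv2 (a : ℕ → ℕ → ℝ) (l : ℝ) : Prop :=
  ∀ ε > (0 : ℝ), Tendsto (fun N : ℕ × ℕ =>
    ((((Finset.range (N.1 + 1)) ×ˢ (Finset.range (N.2 + 1))).filter
        (fun jk => ε ≤ |a jk.1 jk.2 - l|)).card : ℝ) / (N.1 * N.2))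
    atTop (nhds 0)

/-- A bivariate modulus of continuity. -/
def IsModulus2 (ω : ℝ → ℝ → ℝ) : Prop :=
  (∀ a b, 0 ≤ a → 0 ≤ b → 0 ≤ ω a b) ∧
  (∀ a a' b, 0 ≤ a → a ≤ a' → 0 ≤ b → ω a b ≤ ω a' b) ∧
  (∀ a b b', 0 ≤ a → 0 ≤ b → b ≤ b' → ω a b ≤ ω a b') ∧
  (∀ a a' b, 0 ≤ a → 0 ≤ a' → 0 ≤ b → ω (a + a') b ≤ ω a b + ω a' b) ∧
  (∀ a b b', 0 ≤ a → 0 ≤ b → 0 ≤ b' → ω a (b + b') ≤ ω a b + ω a b') ∧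
  Tendsto (fun d : ℝ × ℝ => ω d.1 d.2)
    (nhdsWithin (0, 0) (Set.Ioi 0 ×ˢ Set.Ioi 0)) (nhds 0)

/-- Membership in the class `H_{ω₂}`. -/
def MemHomega2 (ω g : ℝ → ℝ → ℝ) : Prop :=
  ∀ u₁ v₁ u₂ v₂ : ℝ, 0 ≤ u₁ → 0 ≤ v₁ → 0 ≤ u₂ → 0 ≤ v₂ →
    |g u₁ v₁ - g u₂ v₂| ≤
      ω |u₁ / (1 + u₁) - u₂ / (1 + u₂)| |v₁ / (1 + v₁) - v₂ / (1 + v₂)|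

/-- The bivariate modulus `ω̃(g; δ₁, δ₂)`. -/
def omegaTilde2 (g : ℝ → ℝ → ℝ) (δ₁ δ₂ : ℝ) : ℝ :=
  sSup {d | ∃ t s x y : ℝ, 0 ≤ t ∧ 0 ≤ s ∧ 0 ≤ x ∧ 0 ≤ y ∧
    |t / (1 + t) - x / (1 + x)| ≤ δ₁ ∧ |s / (1 + s) - y / (1 + y)| ≤ δ₂ ∧
    d = |g t s - g x y|}

/-!
Up to the factor `p₁q₁p₂q₂ ≤ 1`, `L_{n₁,n₂}(f; x, y)` is the average of `f` over the grid of nodes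
against a product of two probability vectors, the normalised terms of the `(p,q)`-binomial
expansion of `ℓ_{n₁}^{p₁,q₁}(x)` and `ℓ_{n₂}^{p₂,q₂}(y)`. Comparing `f(t,s)` and `f(x,y)` with
`f(x₀,y₀)` for points `x₀, y₀ ∈ E` nearest to `x, y`, the Lipschitz-type condition and the
subadditivity of `u ↦ u ^ α` give
`|f(t,s) - f(x,y)| ≤ M ((a + d(x,E)^α₁)(b + d(y,E)^α₂) + d(x,E)^α₁ d(y,E)^α₂)`
with `a = |t/(1+t) - x/(1+x)|^α₁`, `b = |s/(1+s) - y/(1+y)|^α₂`. Averaging this product bound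
factorises, and Jensen's inequality for the concave `u ↦ u ^ (α/2)` bounds the average of `a`
by `Δ_{n₁}(x)^{α₁/2}`, and that of `b` by `Δ_{n₂}(y)^{α₂/2}`.
-/

/-- Jensen's inequality for the concave function `u ↦ u ^ (α / 2)`. -/
theorem Finset.sum_mul_abs_rpow_le_rpow_sum_mul_sq {ι : Type*} (s : Finset ι) {w z : ι → ℝ}
    {α : ℝ} (hα₀ : 0 ≤ α) (hα₂ : α ≤ 2) (hw : ∀ i ∈ s, 0 ≤ w i) (hw₁ : ∑ i ∈ s, w i = 1) :
    ∑ i ∈ s, w i * |z i| ^ α ≤ (∑ i ∈ s, w i * z i ^ 2) ^ (α / 2) := by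
  have hsq : ∀ i, |z i| ^ α = (z i ^ 2) ^ (α / 2) := fun i => by
    rw [← sq_abs, ← Real.rpow_natCast, ← Real.rpow_mul (abs_nonneg _)]
    ring_nf
  simpa only [hsq, smul_eq_mul] using (Real.concaveOn_rpow (by linarith) (by linarith)).le_map_sum
    hw hw₁ fun i _ => Set.mem_Ici.mpr (sq_nonneg (z i))

lemma abs_div_one_add_sub_div_one_add_le {a b : ℝ} (ha : 0 ≤ a) (hb : 0 ≤ b) :
    |a / (1 + a) - b / (1 + b)| ≤ |a - b| := by
  have hab : a / (1 + a) - b / (1 + b) = (a - b) / ((1 + a) * (1 + b)) := by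
    field_simp
    ring
  have hden : 1 ≤ (1 + a) * (1 + b) := by nlinarith
  rw [hab, abs_div, abs_of_pos (zero_lt_one.trans_le hden)]
  exact div_le_self (abs_nonneg _) hden

lemma abs_sub_rpow_le_add_rpow {a b c d α : ℝ} (hα₀ : 0 ≤ α) (hα₁ : α ≤ 1) (h : |b - c| ≤ d) :
    |a - c| ^ α ≤ |a - b| ^ α + d ^ α :=
  calc |a - c| ^ α ≤ (|a - b| + d) ^ α :=
        Real.rpow_le_rpow (abs_nonneg _) ((abs_sub_le a b c).trans (by linarith)) hα₀
    _ ≤ |a - b| ^ α + d ^ α :=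
        Real.rpow_add_le_add_rpow (abs_nonneg _) ((abs_nonneg _).trans h) hα₀ hα₁

lemma abs_sub_le_of_holder_at {f : ℝ → ℝ → ℝ} {u : ℝ → ℝ} {M α β d₁ d₂ t s x y x₀ y₀ : ℝ}
    (hM : 0 ≤ M) (hα₀ : 0 ≤ α) (hα₁ : α ≤ 1) (hβ₀ : 0 ≤ β) (hβ₁ : β ≤ 1)
    (hts : |f t s - f x₀ y₀| ≤ M * |u t - u x₀| ^ α * |u s - u y₀| ^ β)
    (hxy : |f x y - f x₀ y₀| ≤ M * |u x - u x₀| ^ α * |u y - u y₀| ^ β)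
    (hd₁ : |u x - u x₀| ≤ d₁) (hd₂ : |u y - u y₀| ≤ d₂) :
    |f t s - f x y| ≤
      M * ((|u t - u x| ^ α + d₁ ^ α) * (|u s - u y| ^ β + d₂ ^ β) + d₁ ^ α * d₂ ^ β) := by
  have hd₁₀ : 0 ≤ d₁ := (abs_nonneg _).trans hd₁
  have hd₂₀ : 0 ≤ d₂ := (abs_nonneg _).trans hd₂
  have hts' :
      |f t s - f x₀ y₀| ≤ M * ((|u t - u x| ^ α + d₁ ^ α) * (|u s - u y| ^ β + d₂ ^ β)) := by
    rw [← mul_assoc]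
    refine hts.trans (mul_le_mul (mul_le_mul_of_nonneg_left ?_ hM) ?_ (by positivity)
      (by positivity))
    · exact abs_sub_rpow_le_add_rpow hα₀ hα₁ hd₁
    · exact abs_sub_rpow_le_add_rpow hβ₀ hβ₁ hd₂
  have hxy' : |f x y - f x₀ y₀| ≤ M * (d₁ ^ α * d₂ ^ β) := by
    rw [← mul_assoc]
    exact hxy.trans (mul_le_mul (mul_le_mul_of_nonneg_left
      (Real.rpow_le_rpow (abs_nonneg _) hd₁ hα₀) hM)
      (Real.rpow_le_rpow (abs_nonneg _) hd₂ hβ₀) (by positivity) (by positivity))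
  linarith [abs_sub_le (f t s) (f x₀ y₀) (f x y), abs_sub_comm (f x₀ y₀) (f x y)]

lemma abs_sum_sum_mul_sub_le {ι κ : Type*} {s : Finset ι} {t : Finset κ} {a u : ι → ℝ}
    {b v : κ → ℝ} {F : ι → κ → ℝ} {c M d₁ d₂ : ℝ}
    (ha : ∀ i ∈ s, 0 ≤ a i) (ha₁ : ∑ i ∈ s, a i = 1)
    (hb : ∀ j ∈ t, 0 ≤ b j) (hb₁ : ∑ j ∈ t, b j = 1)
    (hF : ∀ i ∈ s, ∀ j ∈ t, |F i j - c| ≤ M * ((u i + d₁) * (v j + d₂) + d₁ * d₂)) :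
    |∑ i ∈ s, ∑ j ∈ t, a i * b j * F i j - c| ≤
      M * ((∑ i ∈ s, a i * u i + d₁) * (∑ j ∈ t, b j * v j + d₂) + d₁ * d₂) := by
  have hab : ∑ i ∈ s, ∑ j ∈ t, a i * b j = 1 := by rw [← sum_mul_sum, ha₁, hb₁, one_mul]
  have hau : ∑ i ∈ s, a i * (u i + d₁) = ∑ i ∈ s, a i * u i + d₁ := by
    simp only [mul_add, sum_add_distrib, ← sum_mul, ha₁, one_mul]
  have hbv : ∑ j ∈ t, b j * (v j + d₂) = ∑ j ∈ t, b j * v j + d₂ := by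
    simp only [mul_add, sum_add_distrib, ← sum_mul, hb₁, one_mul]
  calc |∑ i ∈ s, ∑ j ∈ t, a i * b j * F i j - c|
      = |∑ i ∈ s, ∑ j ∈ t, a i * b j * (F i j - c)| := by
        simp only [mul_sub, sum_sub_distrib, ← sum_mul, hab, one_mul]
    _ ≤ ∑ i ∈ s, ∑ j ∈ t, a i * b j * |F i j - c| := by
        refine (abs_sum_le_sum_abs _ _).trans (sum_le_sum fun i hi => ?_)
        refine (abs_sum_le_sum_abs _ _).trans (sum_le_sum fun j hj => ?_)
        rw [abs_mul, abs_of_nonneg (mul_nonneg (ha i hi) (hb j hj))]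
    _ ≤ ∑ i ∈ s, ∑ j ∈ t, a i * b j * (M * ((u i + d₁) * (v j + d₂) + d₁ * d₂)) :=
        sum_le_sum fun i hi => sum_le_sum fun j hj =>
          mul_le_mul_of_nonneg_left (hF i hi j hj) (mul_nonneg (ha i hi) (hb j hj))
    _ = M * ((∑ i ∈ s, a i * (u i + d₁)) * (∑ j ∈ t, b j * (v j + d₂))
          + (∑ i ∈ s, ∑ j ∈ t, a i * b j) * (d₁ * d₂)) := by
        rw [sum_mul_sum, sum_mul, ← sum_add_distrib, mul_sum]
        refine sum_congr rfl fun i _ => ?_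
        rw [sum_mul, ← sum_add_distrib, mul_sum]
        exact sum_congr rfl fun j _ => by ring
    _ = _ := by rw [hau, hbv, hab, one_mul]

lemma exists_mem_abs_div_one_add_sub_le_infDist {E : Set ℝ} (hE : E ⊆ Set.Ici 0)
    (hEne : E.Nonempty) (hEcl : IsClosed E) {z : ℝ} (hz : 0 ≤ z) :
    ∃ z₀ ∈ E, |z / (1 + z) - z₀ / (1 + z₀)| ≤ Metric.infDist z E := by
  obtain ⟨z₀, hz₀E, hz₀⟩ := hEcl.exists_infDist_eq_dist hEne z
  exact ⟨z₀, hz₀E, hz₀ ▸ abs_div_one_add_sub_div_one_add_le hz (hE hz₀E)⟩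

section PQCombinatorics

variable {p q : ℝ}

lemma pqInt_pos (hq : 0 < q) (hqp : q < p) {n : ℕ} (hn : n ≠ 0) : 0 < pqInt p q n :=
  div_pos (sub_pos.mpr (pow_lt_pow_left₀ hqp hq.le hn)) (sub_pos.mpr hqp)

lemma pqInt_nonneg (hq : 0 < q) (hqp : q < p) (n : ℕ) : 0 ≤ pqInt p q n := by
  rcases eq_or_ne n 0 with rfl | hn
  · simp [pqInt]
  · exact (pqInt_pos hq hqp hn).le

lemma pqInt_add (hqp : q < p) (a b : ℕ) :
    pqInt p q (a + b) = p ^ a * pqInt p q b + q ^ b * pqInt p q a := by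
  have : p - q ≠ 0 := sub_ne_zero.mpr hqp.ne'
  simp only [pqInt]
  field_simp
  ring

lemma pqFact_pos (hq : 0 < q) (hqp : q < p) (n : ℕ) : 0 < pqFact p q n := by
  induction n with
  | zero => exact one_pos
  | succ n ih => exact mul_pos ih (pqInt_pos hq hqp n.succ_ne_zero)

lemma pqBinom_pos (hq : 0 < q) (hqp : q < p) (n k : ℕ) : 0 < pqBinom p q n k :=
  div_pos (pqFact_pos hq hqp n) (mul_pos (pqFact_pos hq hqp k) (pqFact_pos hq hqp (n - k)))

lemma pqBinom_zero_right (hq : 0 < q) (hqp : q < p) (n : ℕ) : pqBinom p q n 0 = 1 := by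
  simp [pqBinom, pqFact, (pqFact_pos hq hqp n).ne']

lemma pqBinom_self (hq : 0 < q) (hqp : q < p) (n : ℕ) : pqBinom p q n n = 1 := by
  simp [pqBinom, pqFact, (pqFact_pos hq hqp n).ne']

lemma pqBinom_succ_succ (hq : 0 < q) (hqp : q < p) {n k : ℕ} (hk : k < n) :
    pqBinom p q (n + 1) (k + 1)
      = p ^ (k + 1) * pqBinom p q n (k + 1) + q ^ (n - k) * pqBinom p q n k := by
  obtain ⟨a, rfl⟩ : ∃ a, n = k + 1 + a := ⟨n - (k + 1), by omega⟩
  have hint := pqInt_add (p := p) hqp (k + 1) (a + 1)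
  rw [show k + 1 + (a + 1) = k + 1 + a + 1 by omega] at hint
  rw [pqBinom, pqBinom, pqBinom, show k + 1 + a + 1 - (k + 1) = a + 1 by omega,
    show k + 1 + a - (k + 1) = a by omega, show k + 1 + a - k = a + 1 by omega]
  simp only [pqFact]
  rw [hint]
  have := (pqFact_pos hq hqp k).ne'
  have := (pqFact_pos hq hqp a).ne'
  have := (pqInt_pos hq hqp k.succ_ne_zero).ne'
  have := (pqInt_pos hq hqp a.succ_ne_zero).ne'
  field_simp

/-- The coefficient of `x ^ k` in `ℓ_n^{p,q}(x)`. -/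
def pqCoeff (p q : ℝ) (n k : ℕ) : ℝ :=
  p ^ (n - k).choose 2 * q ^ k.choose 2 * pqBinom p q n k

lemma pqCoeff_pos (hq : 0 < q) (hqp : q < p) (n k : ℕ) : 0 < pqCoeff p q n k :=
  mul_pos (mul_pos (pow_pos (hq.trans hqp) _) (pow_pos hq _)) (pqBinom_pos hq hqp n k)

lemma pqCoeff_succ_zero (hq : 0 < q) (hqp : q < p) (n : ℕ) :
    pqCoeff p q (n + 1) 0 = p ^ n * pqCoeff p q n 0 := by
  simp only [pqCoeff, pqBinom_zero_right hq hqp, Nat.sub_zero, Nat.choose_succ_succ',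
    Nat.choose_one_right]
  ring

lemma pqCoeff_succ_self (hq : 0 < q) (hqp : q < p) (n : ℕ) :
    pqCoeff p q (n + 1) (n + 1) = q ^ n * pqCoeff p q n n := by
  simp only [pqCoeff, pqBinom_self hq hqp, Nat.sub_self, Nat.choose_succ_succ',
    Nat.choose_one_right]
  ring

lemma pqCoeff_succ_succ (hq : 0 < q) (hqp : q < p) {n k : ℕ} (hk : k < n) :
    pqCoeff p q (n + 1) (k + 1) = p ^ n * pqCoeff p q n (k + 1) + q ^ n * pqCoeff p q n k := by
  obtain ⟨m, rfl⟩ : ∃ m, n = k + 1 + m := ⟨n - (k + 1), by omega⟩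
  simp only [pqCoeff, pqBinom_succ_succ hq hqp hk, show k + 1 + m + 1 - (k + 1) = m + 1 by omega,
    show k + 1 + m - (k + 1) = m by omega, show k + 1 + m - k = m + 1 by omega,
    Nat.choose_succ_succ', Nat.choose_one_right]
  ring

theorem pqEll_eq_sum (hq : 0 < q) (hqp : q < p) (x : ℝ) (n : ℕ) :
    pqEll p q n x = ∑ k ∈ range (n + 1), pqCoeff p q n k * x ^ k := by
  induction n with
  | zero => simp [pqEll, pqCoeff, pqBinom, pqFact]
  | succ n ih =>
    have hmid : ∑ k ∈ range n, pqCoeff p q (n + 1) (k + 1) * x ^ (k + 1)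
        = p ^ n * ∑ k ∈ range n, pqCoeff p q n (k + 1) * x ^ (k + 1)
          + q ^ n * x * ∑ k ∈ range n, pqCoeff p q n k * x ^ k := by
      rw [mul_sum, mul_sum, ← sum_add_distrib]
      refine sum_congr rfl fun k hk => ?_
      rw [pqCoeff_succ_succ hq hqp (mem_range.mp hk)]
      ring
    rw [pqEll, prod_range_succ, ← pqEll, ih, sum_range_succ' _ (n + 1),
      sum_range_succ (fun k => pqCoeff p q (n + 1) (k + 1) * x ^ (k + 1)), hmid,
      pqCoeff_succ_zero hq hqp, pqCoeff_succ_self hq hqp]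
    linear_combination (p ^ n) * sum_range_succ' (fun k => pqCoeff p q n k * x ^ k) n
      + (q ^ n * x) * sum_range_succ (fun k => pqCoeff p q n k * x ^ k) n

lemma pqEll_pos (hq : 0 < q) (hqp : q < p) {x : ℝ} (hx : 0 ≤ x) (n : ℕ) :
    0 < pqEll p q n x :=
  prod_pos fun s _ => by have := hq.trans hqp; positivity

lemma pqNode_nonneg (hq : 0 < q) (hqp : q < p) (n k : ℕ) : 0 ≤ pqNode p q n k :=
  div_nonneg (mul_nonneg (pow_pos (hq.trans hqp) _).le (pqInt_nonneg hq hqp k))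
    (mul_nonneg (pqInt_nonneg hq hqp _) (pow_pos hq _).le)

end PQCombinatorics

section Operator

variable {p q x : ℝ}

def bbhBasis (p q : ℝ) (n : ℕ) (x : ℝ) (k : ℕ) : ℝ :=
  pqCoeff p q n k * x ^ k / pqEll p q n x

lemma bbhBasis_nonneg (hq : 0 < q) (hqp : q < p) (hx : 0 ≤ x) (n k : ℕ) :
    0 ≤ bbhBasis p q n x k :=
  div_nonneg (mul_nonneg (pqCoeff_pos hq hqp n k).le (pow_nonneg hx k))
    (pqEll_pos hq hqp hx n).le

lemma sum_bbhBasis (hq : 0 < q) (hqp : q < p) (hx : 0 ≤ x) (n : ℕ) :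
    ∑ k ∈ range (n + 1), bbhBasis p q n x k = 1 := by
  unfold bbhBasis
  rw [← sum_div, ← pqEll_eq_sum hq hqp, div_self (pqEll_pos hq hqp hx n).ne']

lemma bbh_eq_sum (p q : ℝ) (n : ℕ) (g : ℝ → ℝ) (x : ℝ) :
    bbh p q n g x = p * q * ∑ k ∈ range (n + 1), bbhBasis p q n x k * g (pqNode p q n k) := by
  rw [bbh, mul_sum, mul_sum]
  refine sum_congr rfl fun k _ => ?_
  rw [bbhBasis, pqCoeff, ← Nat.choose_two_right, ← Nat.choose_two_right]
  ring

lemma bbh2_eq_sum (p₁ p₂ q₁ q₂ : ℝ) (n₁ n₂ : ℕ) (f : ℝ → ℝ → ℝ) (x y : ℝ) :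
    bbh2 p₁ p₂ q₁ q₂ n₁ n₂ f x y = p₁ * q₁ * p₂ * q₂ *
      ∑ k₁ ∈ range (n₁ + 1), ∑ k₂ ∈ range (n₂ + 1),
        bbhBasis p₁ q₁ n₁ x k₁ * bbhBasis p₂ q₂ n₂ y k₂ *
          f (pqNode p₁ q₁ n₁ k₁) (pqNode p₂ q₂ n₂ k₂) := by
  rw [bbh2, mul_sum, mul_sum]
  refine sum_congr rfl fun k₁ _ => ?_
  rw [mul_sum, mul_sum]
  refine sum_congr rfl fun k₂ _ => ?_
  rw [bbhBasis, bbhBasis, pqCoeff, pqCoeff, ← Nat.choose_two_right, ← Nat.choose_two_right,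
    ← Nat.choose_two_right, ← Nat.choose_two_right]
  ring

lemma sum_bbhBasis_mul_abs_rpow_le (hq : 0 < q) (hqp : q < p) (hx : 0 ≤ x) (n : ℕ)
    {α : ℝ} (hα₀ : 0 ≤ α) (hα₂ : α ≤ 2) (g : ℝ → ℝ) :
    ∑ k ∈ range (n + 1), bbhBasis p q n x k * |g (pqNode p q n k)| ^ α
      ≤ (1 / (p * q) * bbh p q n (fun t => g t ^ 2) x) ^ (α / 2) := by
  have hpq : p * q ≠ 0 := (mul_pos (hq.trans hqp) hq).ne'
  rw [bbh_eq_sum, ← mul_assoc, one_div_mul_cancel hpq, one_mul]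
  exact sum_mul_abs_rpow_le_rpow_sum_mul_sq _ hα₀ hα₂ (fun k _ => bbhBasis_nonneg hq hqp hx n k)
    (sum_bbhBasis hq hqp hx n)

end Operator

lemma abs_bbh2_sub_le_of_forall_abs_sub_le {p₁ p₂ q₁ q₂ x y : ℝ}
    (hq₁ : 0 < q₁) (hqp₁ : q₁ < p₁) (hp₁ : p₁ ≤ 1) (hq₂ : 0 < q₂) (hqp₂ : q₂ < p₂) (hp₂ : p₂ ≤ 1)
    (hx : 0 ≤ x) (hy : 0 ≤ y) (n₁ n₂ : ℕ) {f : ℝ → ℝ → ℝ} {g₁ g₂ : ℝ → ℝ} {M α β d₁ d₂ : ℝ}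
    (hM : 0 ≤ M) (hα₀ : 0 ≤ α) (hα₂ : α ≤ 2) (hβ₀ : 0 ≤ β) (hβ₂ : β ≤ 2)
    (hd₁ : 0 ≤ d₁) (hd₂ : 0 ≤ d₂)
    (hf : ∀ t s, 0 ≤ t → 0 ≤ s →
      |f t s - f x y| ≤ M * ((|g₁ t| ^ α + d₁) * (|g₂ s| ^ β + d₂) + d₁ * d₂)) :
    |bbh2 p₁ p₂ q₁ q₂ n₁ n₂ f x y - p₁ * q₁ * p₂ * q₂ * f x y| ≤
      M * (((1 / (p₁ * q₁) * bbh p₁ q₁ n₁ (fun t => g₁ t ^ 2) x) ^ (α / 2) + d₁) *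
          ((1 / (p₂ * q₂) * bbh p₂ q₂ n₂ (fun s => g₂ s ^ 2) y) ^ (β / 2) + d₂) + d₁ * d₂) := by
  have hP₀ : 0 < p₁ * q₁ * p₂ * q₂ := by
    have := hq₁.trans hqp₁; have := hq₂.trans hqp₂; positivity
  have hP₁ : p₁ * q₁ * p₂ * q₂ ≤ 1 :=
    calc p₁ * q₁ * p₂ * q₂ = p₁ * q₁ * (p₂ * q₂) := by ring
      _ ≤ 1 := mul_le_one₀ (mul_le_one₀ hp₁ hq₁.le (hqp₁.le.trans hp₁))
        (mul_pos (hq₂.trans hqp₂) hq₂).le (mul_le_one₀ hp₂ hq₂.le (hqp₂.le.trans hp₂))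
  have hmoment₁ := sum_bbhBasis_mul_abs_rpow_le hq₁ hqp₁ hx n₁ hα₀ hα₂ g₁
  have hmoment₂ := sum_bbhBasis_mul_abs_rpow_le hq₂ hqp₂ hy n₂ hβ₀ hβ₂ g₂
  have hnonneg₁ : 0 ≤ ∑ k ∈ range (n₁ + 1), bbhBasis p₁ q₁ n₁ x k * |g₁ (pqNode p₁ q₁ n₁ k)| ^ α :=
    sum_nonneg fun k _ => mul_nonneg (bbhBasis_nonneg hq₁ hqp₁ hx n₁ k) (by positivity)
  have hnonneg₂ : 0 ≤ ∑ k ∈ range (n₂ + 1), bbhBasis p₂ q₂ n₂ y k * |g₂ (pqNode p₂ q₂ n₂ k)| ^ β :=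
    sum_nonneg fun k _ => mul_nonneg (bbhBasis_nonneg hq₂ hqp₂ hy n₂ k) (by positivity)
  rw [bbh2_eq_sum, ← mul_sub, abs_mul, abs_of_pos hP₀]
  refine (mul_le_of_le_one_left (abs_nonneg _) hP₁).trans ?_
  refine (abs_sum_sum_mul_sub_le (u := fun k => |g₁ (pqNode p₁ q₁ n₁ k)| ^ α)
    (v := fun k => |g₂ (pqNode p₂ q₂ n₂ k)| ^ β) (fun k _ => bbhBasis_nonneg hq₁ hqp₁ hx n₁ k)
    (sum_bbhBasis hq₁ hqp₁ hx n₁) (fun k _ => bbhBasis_nonneg hq₂ hqp₂ hy n₂ k)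
    (sum_bbhBasis hq₂ hqp₂ hy n₂) fun k₁ _ k₂ _ =>
      hf _ _ (pqNode_nonneg hq₁ hqp₁ n₁ k₁) (pqNode_nonneg hq₂ hqp₂ n₂ k₂)).trans ?_
  gcongr
  exact add_nonneg (hnonneg₁.trans hmoment₁) hd₁

theorem bbh2_lipschitz_estimate_general (n₁ n₂ : ℕ)
    (p₁ p₂ q₁ q₂ : ℝ)
    (hq₁ : 0 < q₁) (hqp₁ : q₁ < p₁) (hp₁ : p₁ ≤ 1)
    (hq₂ : 0 < q₂) (hqp₂ : q₂ < p₂) (hp₂ : p₂ ≤ 1)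
    (α₁ α₂ : ℝ) (hα₁0 : 0 < α₁) (hα₁1 : α₁ ≤ 1) (hα₂0 : 0 < α₂) (hα₂1 : α₂ ≤ 1)
    (M : ℝ) (hM : 0 < M)
    (E : Set ℝ) (hE : E ⊆ Set.Ici 0) (hEne : E.Nonempty) (hEcl : IsClosed E)
    (f : ℝ → ℝ → ℝ)
    (hf : ∀ t s : ℝ, 0 ≤ t → 0 ≤ s → ∀ x₁ ∈ E, ∀ y₁ ∈ E,
      |f t s - f x₁ y₁| ≤
        M * |t / (1 + t) - x₁ / (1 + x₁)| ^ α₁ * |s / (1 + s) - y₁ / (1 + y₁)| ^ α₂)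
    (x y : ℝ) (hx : 0 ≤ x) (hy : 0 ≤ y) :
    |bbh2 p₁ p₂ q₁ q₂ n₁ n₂ f x y - p₁ * q₁ * p₂ * q₂ * f x y| ≤
      M * (((1 / (p₁ * q₁)) *
              bbh p₁ q₁ n₁ (fun t => (t / (1 + t) - x / (1 + x)) ^ 2) x) ^ (α₁ / 2) *
            ((1 / (p₂ * q₂)) *
              bbh p₂ q₂ n₂ (fun s => (s / (1 + s) - y / (1 + y)) ^ 2) y) ^ (α₂ / 2) +
          ((1 / (p₁ * q₁)) *
              bbh p₁ q₁ n₁ (fun t => (t / (1 + t) - x / (1 + x)) ^ 2) x) ^ (α₁ / 2) *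
            Metric.infDist y E ^ α₂ +
          ((1 / (p₂ * q₂)) *
              bbh p₂ q₂ n₂ (fun s => (s / (1 + s) - y / (1 + y)) ^ 2) y) ^ (α₂ / 2) *
            Metric.infDist x E ^ α₁ +
          2 * Metric.infDist x E ^ α₁ * Metric.infDist y E ^ α₂) := by
  obtain ⟨x₀, hx₀E, hx₀⟩ := exists_mem_abs_div_one_add_sub_le_infDist hE hEne hEcl hx
  obtain ⟨y₀, hy₀E, hy₀⟩ := exists_mem_abs_div_one_add_sub_le_infDist hE hEne hEcl hy
  refine (abs_bbh2_sub_le_of_forall_abs_sub_le hq₁ hqp₁ hp₁ hq₂ hqp₂ hp₂ hx hy n₁ n₂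
    (g₁ := fun t => t / (1 + t) - x / (1 + x)) (g₂ := fun s => s / (1 + s) - y / (1 + y))
    hM.le hα₁0.le (by linarith) hα₂0.le (by linarith)
    (Real.rpow_nonneg Metric.infDist_nonneg _) (Real.rpow_nonneg Metric.infDist_nonneg _)
    fun t s ht hs => abs_sub_le_of_holder_at (u := fun t => t / (1 + t)) hM.le hα₁0.le hα₁1
      hα₂0.le hα₂1 (hf t s ht hs x₀ hx₀E y₀ hy₀E) (hf x y hx hy x₀ hx₀E y₀ hy₀E) hx₀ hy₀
    ).trans_eq ?_
  ring

/-- Theorem 5.5, bivariate Lipschitz-type estimate. -/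
theorem bbh2_lipschitz_estimate (n₁ n₂ : ℕ) (hn₁ : 1 ≤ n₁) (hn₂ : 1 ≤ n₂)
    (p₁ p₂ q₁ q₂ : ℝ)
    (hq₁ : 0 < q₁) (hqp₁ : q₁ < p₁) (hp₁ : p₁ ≤ 1)
    (hq₂ : 0 < q₂) (hqp₂ : q₂ < p₂) (hp₂ : p₂ ≤ 1)
    (α₁ α₂ : ℝ) (hα₁0 : 0 < α₁) (hα₁1 : α₁ ≤ 1) (hα₂0 : 0 < α₂) (hα₂1 : α₂ ≤ 1)
    (M : ℝ) (hM : 0 < M)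
    (E : Set ℝ) (hE : E ⊆ Set.Ici 0) (hEne : E.Nonempty) (hEcl : IsClosed E)
    (f : ℝ → ℝ → ℝ)
    (hfb : ∃ C : ℝ, ∀ t s : ℝ, 0 ≤ t → 0 ≤ s → |f t s| ≤ C)
    (hfc : ContinuousOn (fun ts : ℝ × ℝ => f ts.1 ts.2) (Set.Ici 0 ×ˢ Set.Ici 0))
    (hf : ∀ t s : ℝ, 0 ≤ t → 0 ≤ s → ∀ x₁ ∈ E, ∀ y₁ ∈ E,
      |f t s - f x₁ y₁| ≤
        M * |t / (1 + t) - x₁ / (1 + x₁)| ^ α₁ * |s / (1 + s) - y₁ / (1 + y₁)| ^ α₂)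
    (x y : ℝ) (hx : 0 ≤ x) (hy : 0 ≤ y) :
    |bbh2 p₁ p₂ q₁ q₂ n₁ n₂ f x y - p₁ * q₁ * p₂ * q₂ * f x y| ≤
      M * (((1 / (p₁ * q₁)) *
              bbh p₁ q₁ n₁ (fun t => (t / (1 + t) - x / (1 + x)) ^ 2) x) ^ (α₁ / 2) *
            ((1 / (p₂ * q₂)) *
              bbh p₂ q₂ n₂ (fun s => (s / (1 + s) - y / (1 + y)) ^ 2) y) ^ (α₂ / 2) +
          ((1 / (p₁ * q₁)) *
              bbh p₁ q₁ n₁ (fun t => (t / (1 + t) - x / (1 + x)) ^ 2) x) ^ (α₁ / 2) *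
            Metric.infDist y E ^ α₂ +
          ((1 / (p₂ * q₂)) *
              bbh p₂ q₂ n₂ (fun s => (s / (1 + s) - y / (1 + y)) ^ 2) y) ^ (α₂ / 2) *
            Metric.infDist x E ^ α₁ +
          2 * Metric.infDist x E ^ α₁ * Metric.infDist y E ^ α₂) :=
  bbh2_lipschitz_estimate_general n₁ n₂ p₁ p₂ q₁ q₂ hq₁ hqp₁ hp₁ hq₂ hqp₂ hp₂ α₁ α₂ hα₁0 hα₁1 hα₂0
    hα₂1 M hM E hE hEne hEcl f hf x y hx hy
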